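/- arXiv:1702.02718 — 4 statements merged into one kernel-verified Lean document; each statement's English description precedes it below -/
import Mathlib

section
/- Suppose φ : ℝ → X is uniformly continuous and Bochner almost automorphic, i.e., from every sequence (t'_n) in ℝ one can extract a subsequence (t_n) and a function ψ : ℝ → X such that φ(t + t_n) → ψ(t) and ψ(t − t_n) → φ(t) pointwise for every t ∈ ℝ. Then φ is Bohr almost automorphic: the convergences φ(t+t_n) → ψ(t) and ψ(t−t_n) → φ(t) hold uniformly in t on every compact interval [−l, l]. -/
open Set Filter Topology

/-- An equicontinuous sequence of functions converging pointwise converges uniformly on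
compact intervals. -/
lemma equi_tendstoUniformlyOn {X : Type*} [MetricSpace X] (F : ℕ → ℝ → X) (g : ℝ → X)
    (hF : ∀ ε > (0 : ℝ), ∃ δ > (0 : ℝ), ∀ (n : ℕ) (s t : ℝ), dist s t < δ →
      dist (F n s) (F n t) ≤ ε)
    (hpt : ∀ t : ℝ, Tendsto (fun n => F n t) atTop (𝓝 (g t))) (l : ℝ) :
    TendstoUniformlyOn F g atTop (Set.Icc (-l) l) := by
  rw [Metric.tendstoUniformlyOn_iff]
  intro ε hε
  obtain ⟨δ, hδ, hmod⟩ := hF (ε / 4) (by linarith)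
  -- modulus for g
  have hg : ∀ s t : ℝ, dist s t < δ → dist (g s) (g t) ≤ ε / 4 := by
    intro s t hst
    have : Tendsto (fun n => dist (F n s) (F n t)) atTop (𝓝 (dist (g s) (g t))) :=
      ((hpt s).dist (hpt t))
    exact le_of_tendsto this (Eventually.of_forall fun n => hmod n s t hst)
  -- finite cover of the compact interval
  have hK : IsCompact (Set.Icc (-l) l) := isCompact_Icc
  have hcov : Set.Icc (-l) l ⊆ ⋃ x ∈ Set.Icc (-l) l, Metric.ball x δ := by
    intro x hx
    exact Set.mem_biUnion hx (Metric.mem_ball_self hδ)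
  obtain ⟨s, hsub, hsfin, hscov⟩ := hK.elim_finite_subcover_image
    (fun x _ => Metric.isOpen_ball) hcov
  -- eventually close at each point of s
  have hev : ∀ᶠ n in atTop, ∀ x ∈ s, dist (g x) (F n x) < ε / 4 := by
    have : ∀ x ∈ s, ∀ᶠ n in atTop, dist (g x) (F n x) < ε / 4 := by
      intro x _
      have := (hpt x).dist (tendsto_const_nhds (x := g x))
      simp only [dist_self] at this
      have h4 : (0:ℝ) < ε / 4 := by linarith
      have := this (Iio_mem_nhds (by simpa using h4) : Set.Iio (ε/4) ∈ 𝓝 (0:ℝ))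
      filter_upwards [this] with n hn
      rw [dist_comm]
      exact hn
    exact (hsfin.eventually_all).mpr this
  filter_upwards [hev] with n hn t ht
  obtain ⟨x, hxs, hxt⟩ := Set.mem_iUnion₂.mp (hscov ht)
  have hxt' : dist t x < δ := by simpa [Metric.mem_ball] using hxt
  calc dist (g t) (F n t) ≤ dist (g t) (g x) + dist (g x) (F n x) + dist (F n x) (F n t) :=
        dist_triangle4 _ _ _ _
    _ < ε / 4 + ε / 4 + ε / 4 := by
        have h1 := hg t x hxt'
        have h2 := hn x hxs
        have h3 := hmod n x t (by rwa [dist_comm])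
        linarith
    _ < ε := by linarith

/-- A uniformly continuous Bochner almost automorphic function is Bohr almost automorphic:
the pointwise convergences of translates along a subsequence can be taken uniform on each
compact interval `[-l, l]`. -/
theorem stmt4 {X : Type*} [MetricSpace X] [CompleteSpace X] (φ : ℝ → X)
    (hc : Continuous φ) (hu : UniformContinuous φ)
    (hBochner : ∀ t' : ℕ → ℝ, ∃ k : ℕ → ℕ, StrictMono k ∧ ∃ ψ : ℝ → X,
      (∀ t : ℝ, Tendsto (fun n => φ (t + t' (k n))) atTop (𝓝 (ψ t))) ∧
      (∀ t : ℝ, Tendsto (fun n => ψ (t - t' (k n))) atTop (𝓝 (φ t)))) :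
    ∀ t' : ℕ → ℝ, ∃ k : ℕ → ℕ, StrictMono k ∧ ∃ ψ : ℝ → X,
      (∀ l > (0 : ℝ), TendstoUniformlyOn (fun n t => φ (t + t' (k n))) ψ atTop (Set.Icc (-l) l)) ∧
      (∀ l > (0 : ℝ), TendstoUniformlyOn (fun n t => ψ (t - t' (k n))) φ atTop (Set.Icc (-l) l)) := by
  intro t'
  obtain ⟨k, hk, ψ, h1, h2⟩ := hBochner t'
  refine ⟨k, hk, ψ, ?_, ?_⟩
  · intro l _
    apply equi_tendstoUniformlyOn _ _ ?_ h1
    intro ε hε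
    obtain ⟨δ, hδ, hmod⟩ := Metric.uniformContinuous_iff.mp hu ε hε
    refine ⟨δ, hδ, fun n s t hst => ?_⟩
    have : dist (s + t' (k n)) (t + t' (k n)) < δ := by
      simpa [Real.dist_eq, add_sub_add_right_eq_sub] using hst
    exact (hmod this).le
  · intro l _
    apply equi_tendstoUniformlyOn _ _ ?_ h2
    intro ε hε
    obtain ⟨δ, hδ, hmod⟩ := Metric.uniformContinuous_iff.mp hu ε hε
    -- ψ has the same modulus
    have hψ : ∀ s t : ℝ, dist s t < δ → dist (ψ s) (ψ t) ≤ ε := by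
      intro s t hst
      have : Tendsto (fun n => dist (φ (s + t' (k n))) (φ (t + t' (k n)))) atTop
          (𝓝 (dist (ψ s) (ψ t))) := (h1 s).dist (h1 t)
      refine le_of_tendsto this (Eventually.of_forall fun n => ?_)
      have : dist (s + t' (k n)) (t + t' (k n)) < δ := by
        simpa [Real.dist_eq, add_sub_add_right_eq_sub] using hst
      exact (hmod this).le
    refine ⟨δ, hδ, fun n s t hst => ?_⟩
    apply hψ
    simpa [Real.dist_eq, sub_sub_sub_cancel_right] using hst
end

section
/- Let φ ∈ C(ℝ,X) and ψ ∈ C(ℝ,Y), and suppose every sequence (t_n) such that ψ(·+t_n) converges uniformly on ℝ also has the property that φ(·+t_n) converges uniformly on ℝ (i.e., 𝔐_ψ^u ⊆ 𝔐_φ^u). Then every sequence (t_n) such that ψ(·+t_n) → ψ uniformly on ℝ satisfies φ(·+t_n) → φ uniformly on ℝ (i.e., 𝔑_ψ^u ⊆ 𝔑_φ^u). -/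
open Set Filter Topology

/-- If `𝔐_ψ^u ⊆ 𝔐_φ^u` (every sequence along which the translates of `ψ` converge uniformly
on `ℝ` is a sequence along which the translates of `φ` converge uniformly on `ℝ`), then
`𝔑_ψ^u ⊆ 𝔑_φ^u`. -/
theorem stmt5 {X Y : Type*} [MetricSpace X] [MetricSpace Y] (φ : ℝ → X) (ψ : ℝ → Y)
    (hφ : Continuous φ) (hψ : Continuous ψ)
    (h : ∀ tn : ℕ → ℝ,
      (∃ g : ℝ → Y, TendstoUniformly (fun n t => ψ (t + tn n)) g atTop) →
      (∃ g' : ℝ → X, TendstoUniformly (fun n t => φ (t + tn n)) g' atTop)) :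
    ∀ tn : ℕ → ℝ, TendstoUniformly (fun n t => ψ (t + tn n)) ψ atTop →
      TendstoUniformly (fun n t => φ (t + tn n)) φ atTop := by
  intro tn htn
  -- interleave tn with the constant sequence 0
  set s : ℕ → ℝ := fun n => if n % 2 = 0 then tn (n / 2) else 0 with hs
  have hψs : TendstoUniformly (fun n t => ψ (t + s n)) ψ atTop := by
    rw [Metric.tendstoUniformly_iff] at htn ⊢
    intro ε hε
    obtain ⟨N, hN⟩ := (htn ε hε).exists_forall_of_atTop
    rw [eventually_atTop]
    refine ⟨2 * N, fun n hn x => ?_⟩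
    by_cases hpar : n % 2 = 0
    · have : s n = tn (n / 2) := by simp [hs, hpar]
      rw [this]
      exact hN _ (by omega) x
    · have : s n = 0 := by simp [hs, hpar]
      rw [this]
      simpa using hε
  obtain ⟨g', hg'⟩ := h s ⟨ψ, hψs⟩
  rw [Metric.tendstoUniformly_iff] at hg'
  have hgφ : ∀ t, g' t = φ t := by
    intro t
    refine eq_of_forall_dist_le fun ε hε => ?_
    obtain ⟨N, hN⟩ := (hg' ε hε).exists_forall_of_atTop
    have hodd : s (2 * N + 1) = 0 := by simp [hs, Nat.mul_add_mod]
    have := hN (2 * N + 1) (by omega) t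
    rw [hodd] at this
    simpa using this.le
  rw [Metric.tendstoUniformly_iff]
  intro ε hε
  obtain ⟨N, hN⟩ := (hg' ε hε).exists_forall_of_atTop
  rw [eventually_atTop]
  refine ⟨N, fun m hm x => ?_⟩
  have heven : s (2 * m) = tn m := by simp [hs]
  have := hN (2 * m) (by omega) x
  rw [heven, hgφ] at this
  exact this
end

section
/- Let u, f : ℝ → [0,∞) be continuous bounded functions and ν > α ≥ 0. If u(t) ≤ ∫_{-∞}^t e^{-ν(t−τ)} (α u(τ) + f(τ)) dτ for all t ∈ ℝ, then u(t) ≤ ∫_{-∞}^t e^{-k(t−τ)} f(τ) dτ for all t ∈ ℝ, where k := ν − α. -/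
open Set MeasureTheory Filter Topology


section KeyAux

private lemma expker_hasDerivAt (c t : ℝ) (hc : c ≠ 0) (τ : ℝ) :
    HasDerivAt (fun x => Real.exp (-(c * (t - x))) / c) (Real.exp (-(c * (t - τ)))) τ := by
  have hfun : (fun x : ℝ => -(c * (t - x))) = fun x : ℝ => c * x + -(c * t) := by
    funext x; ring
  have h1 : HasDerivAt (fun x : ℝ => -(c * (t - x))) c τ := by
    rw [hfun]; simpa using ((hasDerivAt_id τ).const_mul c).add_const (-(c*t))
  have h2 := (h1.exp).div_const c
  simpa [mul_div_cancel_right₀ _ hc] using h2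

private lemma expker_intervalIntegrable (c t y z : ℝ) :
    IntervalIntegrable (fun τ => Real.exp (-(c * (t - τ)))) volume y z :=
  (Real.continuous_exp.comp (by fun_prop)).intervalIntegrable y z

private lemma expker_interval (c t y : ℝ) (hc : c ≠ 0) :
    ∫ τ in y..t, Real.exp (-(c * (t - τ)))
      = (1 - Real.exp (-(c * (t - y)))) / c := by
  rw [intervalIntegral.integral_eq_sub_of_hasDerivAt
    (fun τ _ => expker_hasDerivAt c t hc τ) (expker_intervalIntegrable c t y t)]
  rw [sub_div]
  congr 2
  rw [sub_self, mul_zero, neg_zero, Real.exp_zero]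

private lemma expker_integrableOn {c : ℝ} (hc : 0 < c) (t : ℝ) :
    IntegrableOn (fun τ => Real.exp (-(c * (t - τ)))) (Set.Iic t) := by
  refine integrableOn_Iic_of_intervalIntegral_norm_bounded (1 / c) t
    (fun y => (Real.continuous_exp.comp (by fun_prop)).integrableOn_Ioc) tendsto_id ?_
  filter_upwards [eventually_le_atBot t] with y hy
  simp only [Real.norm_eq_abs, Real.abs_exp, id_eq]
  rw [expker_interval c t y hc.ne']
  have := (Real.exp_pos (-(c * (t - y)))).le
  rw [div_le_div_iff_of_pos_right hc]
  linarith

private lemma expker_integral {c : ℝ} (hc : 0 < c) (t : ℝ) :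
    ∫ τ in Set.Iic t, Real.exp (-(c * (t - τ))) = 1 / c := by
  have htend : Tendsto (fun x => Real.exp (-(c * (t - x))) / c) atBot (𝓝 0) := by
    have h1 : Tendsto (fun x : ℝ => -(c * (t - x))) atBot atBot := by
      have : (fun x : ℝ => -(c * (t - x))) = fun x : ℝ => c * x + -(c * t) := by
        funext x; ring
      rw [this]
      exact tendsto_atBot_add_const_right _ _ (tendsto_id.const_mul_atBot hc)
    simpa using (Real.tendsto_exp_atBot.comp h1).div_const c
  have := MeasureTheory.integral_Iic_of_hasDerivAt_of_tendsto' (a := t)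
    (fun x _ => expker_hasDerivAt c t hc.ne' x) (expker_integrableOn hc t) htend
  simpa using this

private lemma ker_mul_integrableOn {c : ℝ} (hc : 0 < c) (t : ℝ) {g : ℝ → ℝ}
    (hg : Continuous g) {B : ℝ} (hB : ∀ x, |g x| ≤ B) :
    IntegrableOn (fun τ => Real.exp (-(c * (t - τ))) * g τ) (Set.Iic t) := by
  refine Integrable.mono' ((expker_integrableOn hc t).mul_const B)
    ((Real.continuous_exp.comp (by fun_prop)).mul hg).aestronglyMeasurable ?_
  filter_upwards with τ
  rw [norm_mul, Real.norm_of_nonneg (Real.exp_pos _).le]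
  exact mul_le_mul_of_nonneg_left (hB τ) (Real.exp_pos _).le

private lemma inner_calc (α ν s t : ℝ) (hα : α ≠ 0) :
    α * ∫ τ in s..t, Real.exp (-(ν * (t - τ))) * Real.exp (-((ν - α) * (τ - s)))
      = Real.exp (-((ν - α) * (t - s))) - Real.exp (-(ν * (t - s))) := by
  have hfun : (fun τ => Real.exp (-(ν * (t - τ))) * Real.exp (-((ν - α) * (τ - s))))
      = fun τ => Real.exp (α * τ + ((ν - α) * s - ν * t)) := by
    funext τ; rw [← Real.exp_add]; congr 1; ring
  have hD : ∀ τ : ℝ, HasDerivAt (fun x => Real.exp (α * x + ((ν - α) * s - ν * t)) / α)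
      (Real.exp (α * τ + ((ν - α) * s - ν * t))) τ := by
    intro τ
    have h1 : HasDerivAt (fun x : ℝ => α * x + ((ν - α) * s - ν * t)) α τ := by
      simpa using ((hasDerivAt_id τ).const_mul α).add_const ((ν - α) * s - ν * t)
    have h2 := (h1.exp).div_const α
    simpa [mul_div_cancel_right₀ _ hα] using h2
  rw [hfun, intervalIntegral.integral_eq_sub_of_hasDerivAt (fun τ _ => hD τ)
    ((Real.continuous_exp.comp (by fun_prop)).intervalIntegrable s t)]
  have e1 : α * t + ((ν - α) * s - ν * t) = -((ν - α) * (t - s)) := by ring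
  have e2 : α * s + ((ν - α) * s - ν * t) = -(ν * (t - s)) := by ring
  rw [e1, e2]
  field_simp

private lemma fubini_key (f : ℝ → ℝ) (hf : Continuous f) (hf0 : ∀ x, 0 ≤ f x)
    (Mf : ℝ) (hMf : ∀ x, f x ≤ Mf) (α ν : ℝ) (hα : 0 < α) (hαν : α < ν) (t : ℝ)
    (G : ℝ → ℝ)
    (hG : ∀ r, G r = ∫ s in Set.Iic r, Real.exp (-((ν - α) * (r - s))) * f s) :
    IntegrableOn (fun τ => Real.exp (-(ν * (t - τ))) * G τ) (Set.Iic t) ∧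
      α * ∫ τ in Set.Iic t, Real.exp (-(ν * (t - τ))) * G τ =
        G t - ∫ s in Set.Iic t, Real.exp (-(ν * (t - s))) * f s := by
  have hν : 0 < ν := hα.trans hαν
  have hk : 0 < ν - α := sub_pos.2 hαν
  have hfabs : ∀ x, |f x| ≤ Mf := fun x => by rw [abs_of_nonneg (hf0 x)]; exact hMf x
  have hMf0 : 0 ≤ Mf := (hf0 0).trans (hMf 0)
  have hGker : ∀ r : ℝ, IntegrableOn (fun s => Real.exp (-((ν - α) * (r - s))) * f s)
      (Set.Iic r) := fun r => ker_mul_integrableOn hk r hf hfabs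
  have hG0 : ∀ r, 0 ≤ G r := by
    intro r; rw [hG]
    exact setIntegral_nonneg measurableSet_Iic fun s _ =>
      mul_nonneg (Real.exp_pos _).le (hf0 s)
  have hGb : ∀ r, G r ≤ Mf / (ν - α) := by
    intro r; rw [hG]
    calc ∫ s in Set.Iic r, Real.exp (-((ν - α) * (r - s))) * f s
        ≤ ∫ s in Set.Iic r, Real.exp (-((ν - α) * (r - s))) * Mf :=
          setIntegral_mono_on (hGker r) ((expker_integrableOn hk r).mul_const Mf)
            measurableSet_Iic
            (fun s _ => mul_le_mul_of_nonneg_left (hMf s) (Real.exp_pos _).le)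
      _ = Mf / (ν - α) := by
          rw [integral_mul_const, expker_integral hk r]; ring
  -- the product function
  set F : ℝ × ℝ → ℝ := fun q => ({q : ℝ × ℝ | q.1 ≤ t ∧ q.2 ≤ q.1}).indicator
    (fun q => Real.exp (-(ν * (t - q.1))) * (Real.exp (-((ν - α) * (q.1 - q.2))) * f q.2)) q
    with hFdef
  have hE : MeasurableSet {q : ℝ × ℝ | q.1 ≤ t ∧ q.2 ≤ q.1} :=
    (measurableSet_le measurable_fst measurable_const).inter
      (measurableSet_le measurable_snd measurable_fst)
  have hFmeas : AEStronglyMeasurable F (volume.prod volume) := by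
    refine (Continuous.aestronglyMeasurable ?_).indicator hE
    exact (Real.continuous_exp.comp (by fun_prop)).mul
      ((Real.continuous_exp.comp (by fun_prop)).mul (hf.comp continuous_snd))
  have hFnn : ∀ q, 0 ≤ F q := fun q => Set.indicator_nonneg
    (fun q _ => mul_nonneg (Real.exp_pos _).le
      (mul_nonneg (Real.exp_pos _).le (hf0 q.2))) q
  have hsliceInt : ∀ τ, Integrable (fun s => F (τ, s)) := by
    intro τ
    by_cases h1 : τ ≤ t
    · have heq : (fun s => F (τ, s)) = fun s => Real.exp (-(ν * (t - τ))) *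
          (Set.Iic τ).indicator (fun s' => Real.exp (-((ν - α) * (τ - s'))) * f s') s := by
        funext s
        by_cases h2 : s ≤ τ <;>
          simp [hFdef, Set.indicator_apply, Set.mem_setOf_eq, Set.mem_Iic, h1, h2]
      rw [heq]
      exact ((integrable_indicator_iff measurableSet_Iic).2 (hGker τ)).const_mul _
    · have heq : (fun s => F (τ, s)) = fun _ => 0 := by
        funext s
        simp [hFdef, Set.indicator_apply, Set.mem_setOf_eq, h1]
      rw [heq]
      exact integrable_zero _ _ _
  have hIntSlice : ∀ τ, (∫ s, F (τ, s)) =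
      (Set.Iic t).indicator (fun r => Real.exp (-(ν * (t - r))) * G r) τ := by
    intro τ
    by_cases h1 : τ ≤ t
    · rw [Set.indicator_of_mem (show _ ∈ Set.Iic t from h1)]
      have heq : (fun s => F (τ, s)) = (Set.Iic τ).indicator
          (fun s' => Real.exp (-(ν * (t - τ))) * (Real.exp (-((ν - α) * (τ - s'))) * f s')) := by
        funext s
        by_cases h2 : s ≤ τ <;>
          simp [hFdef, Set.indicator_apply, Set.mem_setOf_eq, Set.mem_Iic, h1, h2]
      rw [heq, integral_indicator measurableSet_Iic, integral_const_mul, hG τ]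
    · rw [Set.indicator_of_notMem (show ¬ _ ∈ Set.Iic t from h1)]
      have heq : (fun s => F (τ, s)) = fun _ => 0 := by
        funext s
        simp [hFdef, Set.indicator_apply, Set.mem_setOf_eq, h1]
      rw [heq, integral_zero]
  have hmarg : AEStronglyMeasurable (fun τ => ∫ s, ‖F (τ, s)‖) volume :=
    hFmeas.norm.integral_prod_right'
  have hnormeq : ∀ τ, (∫ s, ‖F (τ, s)‖) =
      (Set.Iic t).indicator (fun r => Real.exp (-(ν * (t - r))) * G r) τ := by
    intro τ
    rw [show (fun s => ‖F (τ, s)‖) = fun s => F (τ, s) from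
      funext fun s => Real.norm_of_nonneg (hFnn _)]
    exact hIntSlice τ
  have hFint : Integrable F (volume.prod volume) := by
    rw [integrable_prod_iff hFmeas]
    refine ⟨Eventually.of_forall hsliceInt, ?_⟩
    refine Integrable.mono'
      (g := (Set.Iic t).indicator (fun r => Real.exp (-(ν * (t - r))) * (Mf / (ν - α))))
      ((integrable_indicator_iff measurableSet_Iic).2 ((expker_integrableOn hν t).mul_const _))
      hmarg ?_
    filter_upwards with τ
    have h0 : 0 ≤ ∫ s, ‖F (τ, s)‖ := integral_nonneg fun s => norm_nonneg _
    rw [Real.norm_of_nonneg h0, hnormeq τ]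
    exact Set.indicator_le_indicator
      (mul_le_mul_of_nonneg_left (hGb τ) (Real.exp_pos _).le)
  have hIntG : IntegrableOn (fun τ => Real.exp (-(ν * (t - τ))) * G τ) (Set.Iic t) := by
    have := hFint.integral_prod_left
    rw [show (fun x => ∫ y, F (x, y)) =
      fun τ => (Set.Iic t).indicator (fun r => Real.exp (-(ν * (t - r))) * G r) τ
      from funext hIntSlice] at this
    exact (integrable_indicator_iff measurableSet_Iic).1 this
  refine ⟨hIntG, ?_⟩
  -- the swap
  have hswap : (∫ τ, ∫ s, F (τ, s)) = ∫ s, ∫ τ, F (τ, s) :=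
    integral_integral_swap hFint
  have hLHS : (∫ τ, ∫ s, F (τ, s)) = ∫ τ in Set.Iic t, Real.exp (-(ν * (t - τ))) * G τ := by
    rw [show (fun τ => ∫ s, F (τ, s)) =
      fun τ => (Set.Iic t).indicator (fun r => Real.exp (-(ν * (t - r))) * G r) τ
      from funext hIntSlice]
    exact integral_indicator measurableSet_Iic
  have hinner : ∀ s, (∫ τ, F (τ, s)) = (Set.Iic t).indicator
      (fun s' => ((Real.exp (-((ν - α) * (t - s'))) - Real.exp (-(ν * (t - s')))) / α) * f s')
      s := by
    intro s
    by_cases h1 : s ≤ t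
    · rw [Set.indicator_of_mem (show _ ∈ Set.Iic t from h1)]
      have heq : (fun τ => F (τ, s)) = (Set.Icc s t).indicator
          (fun τ => Real.exp (-(ν * (t - τ))) * (Real.exp (-((ν - α) * (τ - s))) * f s)) := by
        funext τ
        by_cases h2 : τ ≤ t <;> by_cases h3 : s ≤ τ <;>
          simp [hFdef, Set.indicator_apply, Set.mem_setOf_eq, Set.mem_Icc, h2, h3]
      rw [heq, integral_indicator measurableSet_Icc, integral_Icc_eq_integral_Ioc,
        ← intervalIntegral.integral_of_le h1]
      rw [show (fun τ => Real.exp (-(ν * (t - τ))) * (Real.exp (-((ν - α) * (τ - s))) * f s))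
          = fun τ => (Real.exp (-(ν * (t - τ))) * Real.exp (-((ν - α) * (τ - s)))) * f s from
        funext fun τ => by ring]
      rw [intervalIntegral.integral_mul_const]
      congr 1
      rw [eq_div_iff hα.ne', mul_comm]
      exact inner_calc α ν s t hα.ne'
    · rw [Set.indicator_of_notMem (show ¬ _ ∈ Set.Iic t from h1)]
      have heq : (fun τ => F (τ, s)) = fun _ => 0 := by
        funext τ
        have hn : ¬(τ ≤ t ∧ s ≤ τ) := by rintro ⟨a, b⟩; exact h1 (b.trans a)
        simp only [hFdef, Set.indicator_apply, Set.mem_setOf_eq, hn, if_false]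
      rw [heq, integral_zero]
  have hRHS : (∫ s, ∫ τ, F (τ, s)) =
      (1 / α) * (G t - ∫ s in Set.Iic t, Real.exp (-(ν * (t - s))) * f s) := by
    rw [show (fun s => ∫ τ, F (τ, s)) = fun s => (Set.Iic t).indicator
      (fun s' => ((Real.exp (-((ν - α) * (t - s'))) - Real.exp (-(ν * (t - s')))) / α) * f s') s
      from funext hinner]
    rw [integral_indicator measurableSet_Iic]
    rw [show (fun s' => ((Real.exp (-((ν - α) * (t - s'))) - Real.exp (-(ν * (t - s')))) / α)
          * f s')
        = fun s' => (1 / α) * (Real.exp (-((ν - α) * (t - s'))) * f s'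
          - Real.exp (-(ν * (t - s'))) * f s') from funext fun s' => by ring]
    rw [integral_const_mul, integral_sub (hGker t) (ker_mul_integrableOn hν t hf hfabs), hG t]
  rw [← hLHS, hswap, hRHS]
  field_simp

end KeyAux
/-- Gronwall-type comparison: if `u(t) ≤ ∫_{-∞}^t e^{-ν(t-τ)} (α u(τ) + f(τ)) dτ` for all `t`,
then `u(t) ≤ ∫_{-∞}^t e^{-k(t-τ)} f(τ) dτ` with `k = ν - α`. -/
theorem stmt6 (u f : ℝ → ℝ) (hu : Continuous u) (hf : Continuous f)
    (hub : BddAbove (Set.range u)) (hfb : BddAbove (Set.range f))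
    (hu0 : ∀ t, 0 ≤ u t) (hf0 : ∀ t, 0 ≤ f t)
    (α ν : ℝ) (hα : 0 ≤ α) (hαν : α < ν)
    (hineq : ∀ t : ℝ, u t ≤ ∫ τ in Set.Iic t, Real.exp (-(ν * (t - τ))) * (α * u τ + f τ)) :
    ∀ t : ℝ, u t ≤ ∫ τ in Set.Iic t, Real.exp (-((ν - α) * (t - τ))) * f τ := by
  have hν : 0 < ν := hα.trans_lt hαν
  have hk : 0 < ν - α := sub_pos.2 hαν
  obtain ⟨Mu, hMu'⟩ := hub
  obtain ⟨Mf, hMf'⟩ := hfb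
  have hMu : ∀ x, u x ≤ Mu := fun x => hMu' ⟨x, rfl⟩
  have hMf : ∀ x, f x ≤ Mf := fun x => hMf' ⟨x, rfl⟩
  have hfabs : ∀ x, |f x| ≤ Mf := fun x => by rw [abs_of_nonneg (hf0 x)]; exact hMf x
  rcases eq_or_lt_of_le hα with hα0 | hα0
  · -- α = 0 : direct
    intro t
    calc u t ≤ ∫ τ in Set.Iic t, Real.exp (-(ν * (t - τ))) * (α * u τ + f τ) := hineq t
      _ = ∫ τ in Set.Iic t, Real.exp (-((ν - α) * (t - τ))) * f τ := by
          rw [← hα0]; simp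
  -- α > 0
  set G : ℝ → ℝ := fun r => ∫ s in Set.Iic r, Real.exp (-((ν - α) * (r - s))) * f s
    with hGdef
  have hG : ∀ r, G r = ∫ s in Set.Iic r, Real.exp (-((ν - α) * (r - s))) * f s :=
    fun r => rfl
  have key := fun t => fubini_key f hf hf0 Mf hMf α ν hα0 hαν t G hG
  have hG0 : ∀ r, 0 ≤ G r := by
    intro r; rw [hG]
    exact setIntegral_nonneg measurableSet_Iic fun s _ =>
      mul_nonneg (Real.exp_pos _).le (hf0 s)
  -- supremum setup
  have hne : (Set.range fun r => u r - G r).Nonempty := Set.range_nonempty _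
  have hbdd : BddAbove (Set.range fun r => u r - G r) := by
    refine ⟨Mu, ?_⟩
    rintro x ⟨r, rfl⟩
    have := hG0 r
    have := hMu r
    simp only at *
    linarith
  set M : ℝ := sSup (Set.range fun r => u r - G r) with hMdef
  set M' : ℝ := max M 0 with hM'def
  have hM'0 : 0 ≤ M' := le_max_right _ _
  have hle : ∀ τ, u τ ≤ G τ + M' := by
    intro τ
    have h1 : u τ - G τ ≤ M := le_csSup hbdd ⟨τ, rfl⟩
    have h2 : M ≤ M' := le_max_left _ _
    linarith
  -- main chain
  have chain : ∀ t, u t - G t ≤ α / ν * M' := by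
    intro t
    have hIntG := (key t).1
    have hid := (key t).2
    have int1 : IntegrableOn (fun τ => Real.exp (-(ν * (t - τ))) * (α * u τ + f τ))
        (Set.Iic t) := by
      refine ker_mul_integrableOn hν t (by fun_prop) (B := α * Mu + Mf) ?_
      intro x
      rw [abs_of_nonneg (by nlinarith [hu0 x, hf0 x])]
      nlinarith [hMu x, hMf x, hu0 x]
    have intA : IntegrableOn (fun τ => α * (Real.exp (-(ν * (t - τ))) * G τ)) (Set.Iic t) :=
      hIntG.const_mul α
    have intB : IntegrableOn (fun τ => α * M' * Real.exp (-(ν * (t - τ)))) (Set.Iic t) :=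
      (expker_integrableOn hν t).const_mul (α * M')
    have intC : IntegrableOn (fun τ => Real.exp (-(ν * (t - τ))) * f τ) (Set.Iic t) :=
      ker_mul_integrableOn hν t hf hfabs
    have h2 : (∫ τ in Set.Iic t, Real.exp (-(ν * (t - τ))) * (α * u τ + f τ))
        ≤ ∫ τ in Set.Iic t, (α * (Real.exp (-(ν * (t - τ))) * G τ)
            + α * M' * Real.exp (-(ν * (t - τ))) + Real.exp (-(ν * (t - τ))) * f τ) := by
      refine setIntegral_mono_on int1 ((intA.add intB).add intC) measurableSet_Iic ?_
      intro τ _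
      have hE := (Real.exp_pos (-(ν * (t - τ)))).le
      have := mul_le_mul_of_nonneg_left (hle τ) (mul_nonneg hα hE)
      nlinarith
    have h3 : (∫ τ in Set.Iic t, (α * (Real.exp (-(ν * (t - τ))) * G τ)
            + α * M' * Real.exp (-(ν * (t - τ))) + Real.exp (-(ν * (t - τ))) * f τ))
        = G t + α * M' * (1 / ν) := by
      have intAB : IntegrableOn (fun τ => α * (Real.exp (-(ν * (t - τ))) * G τ)
          + α * M' * Real.exp (-(ν * (t - τ)))) (Set.Iic t) := intA.add intB
      rw [integral_add intAB intC, integral_add intA intB, integral_const_mul,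
        integral_const_mul, expker_integral hν t, hid]
      ring
    have h4 := (hineq t).trans (h2.trans_eq h3)
    have hdiv : α * M' * (1 / ν) = α / ν * M' := by ring
    rw [hdiv] at h4
    linarith
  have hM : M ≤ α / ν * M' := csSup_le hne (by rintro x ⟨r, rfl⟩; exact chain r)
  have hM' : M' ≤ α / ν * M' :=
    max_le hM (mul_nonneg (div_nonneg hα hν.le) hM'0)
  have hfrac : α / ν < 1 := (div_lt_one hν).2 hαν
  have hM'neg : M' ≤ 0 := by nlinarith
  intro t
  have h1 : u t - G t ≤ M := le_csSup hbdd ⟨t, rfl⟩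
  have h2 : M ≤ 0 := le_trans hM (by nlinarith [mul_nonneg (div_nonneg hα hν.le) (neg_nonneg.2 hM'neg)])
  have : u t ≤ G t := by linarith
  exact this
end

section
/- Let f : ℝ → [0,∞) be continuous and bounded, k > 0, and l > L > 0. Then for every t ∈ [−L, L], ∫_{-∞}^t e^{-k(t−τ)} f(τ) dτ ≤ (e^{kL} e^{-kl} / k) · sup_{s∈ℝ} f(s) + ((1 − e^{-kL} e^{-kl}) / k) · max_{|s| ≤ l} f(s). -/
/-!
Split `(-∞, t]` at `-l`. On `(-∞, -l]` bound `f` by `sup f`; the kernel has mass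
`e^{-k(t+l)}/k ≤ e^{kL} e^{-kl}/k` there since `t ≥ -L`. On `(-l, t] ⊆ [-l, l]` bound `f` by its
maximum on `[-l, l]`; the kernel has mass `(1 - e^{-k(t+l)})/k ≤ (1 - e^{-kL} e^{-kl})/k` there
since `t ≤ L`.
-/

open Set MeasureTheory Real

theorem setIntegral_mul_le_integral_mul_of_le {α : Type*} [MeasurableSpace α] {μ : Measure α}
    {s : Set α} (hs : MeasurableSet s) {w g : α → ℝ} {M : ℝ}
    (hwg : IntegrableOn (fun x => w x * g x) s μ) (hw : IntegrableOn w s μ)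
    (hw0 : ∀ x ∈ s, 0 ≤ w x) (hgM : ∀ x ∈ s, g x ≤ M) :
    ∫ x in s, w x * g x ∂μ ≤ (∫ x in s, w x ∂μ) * M := by
  rw [← integral_mul_const]
  exact setIntegral_mono_on hwg (hw.mul_const M) hs
    fun x hx => mul_le_mul_of_nonneg_left (hgM x hx) (hw0 x hx)

theorem exp_neg_mul_sub (k t τ : ℝ) : exp (-(k * (t - τ))) = exp (-(k * t)) * exp (k * τ) := by
  rw [← exp_add]; ring_nf

section ExpKernel

variable {k : ℝ}

theorem integrableOn_exp_neg_mul_sub_Iic (hk : 0 < k) (t c : ℝ) :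
    IntegrableOn (fun τ => exp (-(k * (t - τ)))) (Iic c) := by
  simp only [exp_neg_mul_sub k t]
  exact (integrableOn_exp_mul_Iic hk c).const_mul _

theorem integral_exp_neg_mul_sub_Iic (hk : 0 < k) (t c : ℝ) :
    ∫ τ in Iic c, exp (-(k * (t - τ))) = exp (-(k * (t - c))) / k := by
  simp only [exp_neg_mul_sub k t]
  rw [integral_const_mul, integral_exp_mul_Iic hk, mul_div_assoc]

theorem integral_exp_neg_mul_sub_Ioc (hk : 0 < k) {a t : ℝ} (hat : a ≤ t) :
    ∫ τ in Ioc a t, exp (-(k * (t - τ))) = (1 - exp (-(k * (t - a)))) / k := by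
  rw [← intervalIntegral.integral_of_le hat, ← intervalIntegral.integral_Iic_sub_Iic
    (integrableOn_exp_neg_mul_sub_Iic hk t a) (integrableOn_exp_neg_mul_sub_Iic hk t t),
    integral_exp_neg_mul_sub_Iic hk, integral_exp_neg_mul_sub_Iic hk, sub_self, mul_zero,
    neg_zero, exp_zero, sub_div]

theorem integrableOn_exp_neg_mul_sub_mul_Iic (hk : 0 < k) {f : ℝ → ℝ} (hf : Continuous f) {M : ℝ}
    (hfM : ∀ x, ‖f x‖ ≤ M) (t c : ℝ) :
    IntegrableOn (fun τ => exp (-(k * (t - τ))) * f τ) (Iic c) :=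
  (integrableOn_exp_neg_mul_sub_Iic hk t c).mul_bdd hf.aestronglyMeasurable
    (Filter.Eventually.of_forall hfM)

end ExpKernel

theorem stmt7_general (f : ℝ → ℝ) (hf : Continuous f) (hfb : BddAbove (Set.range f))
    (hf0 : ∀ t, 0 ≤ f t) (k L l : ℝ) (hk : 0 < k) (hLl : L < l) :
    ∀ t ∈ Set.Icc (-L) L,
      (∫ τ in Set.Iic t, Real.exp (-(k * (t - τ))) * f τ) ≤
        Real.exp (k * L) * Real.exp (-(k * l)) / k * sSup (Set.range f) +
        (1 - Real.exp (-(k * L)) * Real.exp (-(k * l))) / k * sSup (f '' Set.Icc (-l) l) := by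
  rintro t ⟨hLt, htL⟩
  have hlt : -l ≤ t := by linarith
  have hfM (x : ℝ) : f x ≤ sSup (range f) := le_csSup hfb (mem_range_self x)
  have hfM' {x : ℝ} (hx : x ∈ Icc (-l) l) : f x ≤ sSup (f '' Icc (-l) l) :=
    le_csSup (hfb.mono (image_subset_range f _)) (mem_image_of_mem f hx)
  have hint := integrableOn_exp_neg_mul_sub_mul_Iic hk hf
    (fun x => (abs_of_nonneg (hf0 x)).trans_le (hfM x)) t t
  rw [← Iic_union_Ioc_eq_Iic hlt, setIntegral_union (Iic_disjoint_Ioc le_rfl) measurableSet_Ioc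
    (hint.mono_set (Iic_subset_Iic.2 hlt)) (hint.mono_set Ioc_subset_Iic_self)]
  have hfar := setIntegral_mul_le_integral_mul_of_le measurableSet_Iic
    (hint.mono_set (Iic_subset_Iic.2 hlt)) (integrableOn_exp_neg_mul_sub_Iic hk t (-l))
    (fun x _ => (exp_pos _).le) (fun x _ => hfM x)
  have hnear := setIntegral_mul_le_integral_mul_of_le measurableSet_Ioc
    (hint.mono_set Ioc_subset_Iic_self)
    ((integrableOn_exp_neg_mul_sub_Iic hk t t).mono_set Ioc_subset_Iic_self)
    (fun x _ => (exp_pos _).le) (fun x hx => hfM' ⟨hx.1.le, hx.2.trans (by linarith)⟩)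
  rw [integral_exp_neg_mul_sub_Iic hk] at hfar
  rw [integral_exp_neg_mul_sub_Ioc hk hlt] at hnear
  have hM'0 : 0 ≤ sSup (f '' Icc (-l) l) := (hf0 t).trans (hfM' ⟨hlt, by linarith⟩)
  have hfar_exp : exp (-(k * (t - -l))) ≤ exp (k * L) * exp (-(k * l)) := by
    rw [← exp_add]; exact exp_le_exp.2 (by nlinarith)
  have hnear_exp : exp (-(k * L)) * exp (-(k * l)) ≤ exp (-(k * (t - -l))) := by
    rw [← exp_add]; exact exp_le_exp.2 (by nlinarith)
  refine add_le_add (hfar.trans ?_) (hnear.trans ?_)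
  · have hM0 : 0 ≤ sSup (range f) := (hf0 0).trans (hfM 0)
    gcongr
  · gcongr

/-- For `t ∈ [-L, L]` with `0 < L < l` and `k > 0`:
`∫_{-∞}^t e^{-k(t-τ)} f(τ) dτ ≤ (e^{kL} e^{-kl}/k) sup f + ((1 - e^{-kL} e^{-kl})/k) max_{|s|≤l} f`. -/
theorem stmt7 (f : ℝ → ℝ) (hf : Continuous f) (hfb : BddAbove (Set.range f))
    (hf0 : ∀ t, 0 ≤ f t) (k L l : ℝ) (hk : 0 < k) (hL : 0 < L) (hLl : L < l) :
    ∀ t ∈ Set.Icc (-L) L,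
      (∫ τ in Set.Iic t, Real.exp (-(k * (t - τ))) * f τ) ≤
        Real.exp (k * L) * Real.exp (-(k * l)) / k * sSup (Set.range f) +
        (1 - Real.exp (-(k * L)) * Real.exp (-(k * l))) / k * sSup (f '' Set.Icc (-l) l) :=
  stmt7_general f hf hfb hf0 k L l hk hLl
end
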